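/- arXiv:1305.4171 — 6 statements merged into one kernel-verified Lean document; each statement's English description precedes it below -/
import Mathlib

section
/- Let C be a convex cone in a real topological vector space, Y a real Hausdorff topological vector space, K ⊆ C a convex compact subset, and {φ_α}_{α∈I} a family of lower semicontinuous, ℚ₊-homogeneous, superadditive correspondences φ_α : C ⇉ Y with nonempty values. If for each x ∈ K the set ⋃_α φ_α(x) is bounded in Y, then ⋃_α φ_α(K) = ⋃_{α, x∈K} φ_α(x) is bounded in Y. -/
/-!
Baire's theorem on the compact set `K`, applied to the sets where every `φ α` lies in `(n + 1) • U'`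
(closed by lower hemicontinuity), gives a point `x₀ ∈ K` near which the whole family is uniformly
bounded by `c • U'`. Compactness of `K` yields a rational `0 < r < 1` such that every
`z = (1 - r) • x₀ + r • x` with `x ∈ K` lies in that neighbourhood, and `z ∈ K` by convexity.
For `y ∈ φ α x` and any `u ∈ φ α x₀`, superadditivity and `ℚ₊`-homogeneity give
`(1 - r) • u + r • y ∈ φ α z ⊆ c • U'`, and `u ∈ c • U'`, so `r • y ∈ c • (U' + U')`,
a bound independent of `α` and `x`.
-/

open Pointwise Set Filter Topology

section

variable {X Y : Type*}

theorem lowerHemicontinuousOn_of_exists_isOpen [TopologicalSpace X] [TopologicalSpace Y]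
    {φ : X → Set Y} {C : Set X}
    (hφ : ∀ x ∈ C, ∀ U : Set Y, IsOpen U → (φ x ∩ U).Nonempty →
      ∃ V : Set X, IsOpen V ∧ x ∈ V ∧ ∀ y ∈ V ∩ C, (φ y ∩ U).Nonempty) :
    LowerHemicontinuousOn φ C := fun x hx => lowerHemicontinuousWithinAt_iff.2 fun U hU hxU => by
  obtain ⟨V, hVo, hxV, hV⟩ := hφ x hx U hU hxU
  filter_upwards [inter_mem_nhdsWithin C (hVo.mem_nhds hxV)] with y ⟨hyC, hyV⟩
  exact hV y ⟨hyV, hyC⟩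

theorem exists_mem_nhds_forall_subset_smul_of_lowerHemicontinuousOn
    [TopologicalSpace X] [R1Space X]
    [AddCommGroup Y] [Module ℝ Y] [TopologicalSpace Y] [IsTopologicalAddGroup Y]
    [ContinuousSMul ℝ Y] {I : Type*} {φ : I → X → Set Y} {C K : Set X} (hKC : K ⊆ C)
    (hK : IsCompact K) (hKne : K.Nonempty) (hφ : ∀ α, LowerHemicontinuousOn (φ α) C)
    (hbdd : ∀ x ∈ K, Bornology.IsVonNBounded ℝ (⋃ α, φ α x))
    {U : Set Y} (hU : U ∈ 𝓝 0) (hUc : IsClosed U) :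
    ∃ x₀ ∈ K, ∃ V ∈ 𝓝 x₀, ∃ c : ℝ, ∀ x ∈ V ∩ K, ∀ α, φ α x ⊆ c • U := by
  have : CompactSpace K := isCompact_iff_compactSpace.mp hK
  have : Nonempty K := hKne.to_subtype
  set G : ℕ → Set K := fun n => {x | ∀ α, φ α x ⊆ ((n : ℝ) + 1) • U}
  have hG : ∀ n, IsClosed (G n) := fun n => by
    simp only [G, ofPred_forall]
    exact isClosed_iInter fun α =>
      (lowerHemicontinuous_iff_isClosed_preimage_Iic.1 (lowerHemicontinuous_restrict_iff.2 (hφ α))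
        _ (hUc.smul_of_ne_zero (by positivity))).preimage (continuous_inclusion hKC)
  have hGcover : ⋃ n, G n = univ := by
    refine eq_univ_of_forall fun x => mem_iUnion.2 ?_
    obtain ⟨r, hr⟩ := absorbs_iff_norm.mp (hbdd x x.2 hU)
    obtain ⟨n, hn⟩ := exists_nat_ge r
    refine ⟨n, fun α => (subset_iUnion (fun β => φ β x) α).trans (hr _ ?_)⟩
    rw [Real.norm_of_nonneg (by positivity)]
    linarith
  obtain ⟨n, x₀, hx₀⟩ := nonempty_interior_of_iUnion_of_closed hG hGcover
  obtain ⟨V, hV, hVK⟩ := mem_nhdsWithin_iff_exists_mem_nhds_inter.mp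
    (mem_nhds_subtype_iff_nhdsWithin.mp (mem_interior_iff_mem_nhds.mp hx₀))
  refine ⟨x₀, x₀.2, V, hV, (n : ℝ) + 1, fun x hx => ?_⟩
  obtain ⟨y, hy, rfl⟩ := hVK hx
  exact hy

theorem Bornology.IsVonNBounded.eventually_lineMap_mem [AddCommGroup X] [Module ℝ X]
    [TopologicalSpace X] [IsTopologicalAddGroup X] [ContinuousSMul ℝ X] {K : Set X}
    (hK : IsVonNBounded ℝ K) {x₀ : X} {V : Set X} (hV : V ∈ 𝓝 x₀) :
    ∀ᶠ t : ℝ in 𝓝 0, ∀ x ∈ K, AffineMap.lineMap x₀ x t ∈ V := by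
  have hV' : (· + x₀) ⁻¹' V ∈ 𝓝 (0 : X) :=
    (continuous_add_const x₀).continuousAt.preimage_mem_nhds (by simpa using hV)
  filter_upwards [(hK.sub (isVonNBounded_singleton x₀) hV').eventually_nhds_zero
    (by simpa using mem_of_mem_nhds hV)] with t ht x hx
  simpa [AffineMap.lineMap_apply_module'] using ht (sub_mem_sub hx rfl)

theorem exists_rat_pos_lt_one_of_eventually {p : ℝ → Prop} (hp : ∀ᶠ t in 𝓝 0, p t) :
    ∃ r : ℚ, 0 < r ∧ r < 1 ∧ p r := by
  have hcast : Tendsto ((↑) : ℚ → ℝ) (𝓝[>] 0) (𝓝 0) :=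
    (Rat.continuous_coe_real.tendsto' 0 0 (by simp)).mono_left nhdsWithin_le_nhds
  obtain ⟨r, hr, hr0, hr1⟩ := ((hcast.eventually hp).and
    (eventually_mem_nhdsWithin.and ((eventually_lt_nhds zero_lt_one).filter_mono
      nhdsWithin_le_nhds))).exists
  exact ⟨r, hr0, hr1, hr⟩

theorem smul_subset_add_of_superadditive [AddCommGroup X] [Module ℝ X] [AddCommGroup Y]
    [Module ℝ Y] {C : Set X} (hCsmul : ∀ t : ℝ, 0 < t → ∀ x ∈ C, t • x ∈ C) {φ : X → Set Y}
    (hsuper : ∀ x ∈ C, ∀ y ∈ C, φ x + φ y ⊆ φ (x + y))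
    (hQhom : ∀ r : ℚ, 0 < r → ∀ x ∈ C, φ ((r : ℝ) • x) = (r : ℝ) • φ x)
    {B : Set Y} (hB : Balanced ℝ B) {x₀ x : X} (hx₀ : x₀ ∈ C) (hx : x ∈ C)
    (hne : (φ x₀).Nonempty) {r : ℚ} (hr0 : 0 < r) (hr1 : r < 1)
    (h₀ : φ x₀ ⊆ B) (hr : φ (AffineMap.lineMap x₀ x (r : ℝ)) ⊆ B) :
    (r : ℝ) • φ x ⊆ B + B := by
  obtain ⟨u, hu⟩ := hne
  have hs0 : (0 : ℚ) < 1 - r := sub_pos.2 hr1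
  have hs : ((1 - r : ℚ) : ℝ) = 1 - r := by push_cast; ring
  rintro _ ⟨y, hy, rfl⟩
  have hmem : (1 - (r : ℝ)) • u + (r : ℝ) • y ∈ B := by
    refine hr ?_
    rw [AffineMap.lineMap_apply_module, ← hs]
    refine hsuper _ (hCsmul _ (by exact_mod_cast hs0) _ hx₀) _
      (hCsmul _ (by exact_mod_cast hr0) _ hx) (add_mem_add ?_ ?_)
    · rw [hQhom _ hs0 _ hx₀]
      exact smul_mem_smul_set hu
    · rw [hQhom _ hr0 _ hx]
      exact smul_mem_smul_set hy
  have hneg : (-(1 - (r : ℝ))) • u ∈ B := by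
    refine hB.smul_mem ?_ (h₀ hu)
    have : (r : ℝ) < 1 := by exact_mod_cast hr1
    have : (0 : ℝ) < r := by exact_mod_cast hr0
    rw [norm_neg, Real.norm_of_nonneg (by linarith)]
    linarith
  exact ⟨_, hmem, _, hneg, by module⟩

end

theorem Balanced.absorbs_of_subset_smul {𝕜 E : Type*} [NormedField 𝕜] [AddCommGroup E]
    [Module 𝕜 E] {U S : Set E} (hU : Balanced 𝕜 U) {t : 𝕜} (hS : S ⊆ t • U) :
    Absorbs 𝕜 U S :=
  Absorbs.of_norm ⟨‖t‖, fun _ hc => hS.trans (hU.smul_mono hc)⟩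

theorem uniform_boundedness_superadditive_general
    {X : Type*} [AddCommGroup X] [Module ℝ X] [TopologicalSpace X]
    [IsTopologicalAddGroup X] [ContinuousSMul ℝ X]
    {Y : Type*} [AddCommGroup Y] [Module ℝ Y] [TopologicalSpace Y]
    [IsTopologicalAddGroup Y] [ContinuousSMul ℝ Y]
    (C : Set X)
    (hCsmul : ∀ (t : ℝ), 0 < t → ∀ x ∈ C, t • x ∈ C)
    (K : Set X) (hKC : K ⊆ C) (hKconv : Convex ℝ K) (hKcpt : IsCompact K)
    {I : Type*} (φ : I → X → Set Y)
    (hne : ∀ α, ∀ x ∈ C, (φ α x).Nonempty)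
    (hsuper : ∀ α, ∀ x ∈ C, ∀ y ∈ C, φ α x + φ α y ⊆ φ α (x + y))
    (hQhom : ∀ α (r : ℚ), 0 < r → ∀ x ∈ C, φ α ((r : ℝ) • x) = (r : ℝ) • φ α x)
    (hlsc : ∀ α, ∀ x ∈ C, ∀ U : Set Y, IsOpen U → (φ α x ∩ U).Nonempty →
      ∃ V : Set X, IsOpen V ∧ x ∈ V ∧ ∀ y ∈ V ∩ C, (φ α y ∩ U).Nonempty)
    (hptbdd : ∀ x ∈ K, Bornology.IsVonNBounded ℝ (⋃ α, φ α x)) :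
    Bornology.IsVonNBounded ℝ (⋃ α, ⋃ x ∈ K, φ α x) := by
  rcases K.eq_empty_or_nonempty with rfl | hKne
  · simp
  refine (nhds_basis_closed_balanced ℝ Y).isVonNBounded_iff.2 ?_
  rintro U ⟨hU0, -, hUbal⟩
  obtain ⟨W, hW0, hWU⟩ := exists_nhds_zero_half hU0
  obtain ⟨U', ⟨hU'0, hU'cl, hU'bal⟩, hU'W⟩ := (nhds_basis_closed_balanced ℝ Y).mem_iff.mp hW0
  have hU'U : U' + U' ⊆ U := by
    rintro _ ⟨a, ha, b, hb, rfl⟩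
    exact hWU _ (hU'W ha) _ (hU'W hb)
  obtain ⟨x₀, hx₀K, V, hV, c, hc⟩ := exists_mem_nhds_forall_subset_smul_of_lowerHemicontinuousOn
    hKC hKcpt hKne (fun α => lowerHemicontinuousOn_of_exists_isOpen (hlsc α)) hptbdd hU'0 hU'cl
  obtain ⟨r, hr0, hr1, hrV⟩ := exists_rat_pos_lt_one_of_eventually
    ((hKcpt.isVonNBounded ℝ).eventually_lineMap_mem hV)
  have hr : (r : ℝ) ≠ 0 := by exact_mod_cast hr0.ne'
  refine hUbal.absorbs_of_subset_smul (t := (r : ℝ)⁻¹ * c)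
    (iUnion_subset fun α => iUnion₂_subset fun x hx => ?_)
  have hseg : AffineMap.lineMap x₀ x (r : ℝ) ∈ K :=
    hKconv.lineMap_mem hx₀K hx ⟨by exact_mod_cast hr0.le, by exact_mod_cast hr1.le⟩
  have hrφ := smul_subset_add_of_superadditive hCsmul (hsuper α) (hQhom α) (hU'bal.smul c)
    (hKC hx₀K) (hKC hx) (hne α x₀ (hKC hx₀K)) hr0 hr1 (hc x₀ ⟨mem_of_mem_nhds hV, hx₀K⟩ α)
    (hc _ ⟨hrV x hx, hseg⟩ α)
  rw [← smul_add, Set.smul_set_subset_iff₀ hr] at hrφ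
  rw [mul_smul]
  exact hrφ.trans (smul_set_mono (smul_set_mono hU'U))

/-- Lemma 1: a pointwise bounded family of lower semicontinuous,
`ℚ₊`-homogeneous, superadditive correspondences is uniformly bounded on every convex
compact subset `K` of the cone `C`. -/
theorem uniform_boundedness_superadditive
    {X : Type*} [AddCommGroup X] [Module ℝ X] [TopologicalSpace X]
    [IsTopologicalAddGroup X] [ContinuousSMul ℝ X]
    {Y : Type*} [AddCommGroup Y] [Module ℝ Y] [TopologicalSpace Y]
    [IsTopologicalAddGroup Y] [ContinuousSMul ℝ Y] [T2Space Y]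
    (C : Set X)
    (hCadd : ∀ x ∈ C, ∀ y ∈ C, x + y ∈ C)
    (hCsmul : ∀ (t : ℝ), 0 < t → ∀ x ∈ C, t • x ∈ C)
    (K : Set X) (hKC : K ⊆ C) (hKconv : Convex ℝ K) (hKcpt : IsCompact K)
    {I : Type*} (φ : I → X → Set Y)
    (hne : ∀ α, ∀ x ∈ C, (φ α x).Nonempty)
    (hsuper : ∀ α, ∀ x ∈ C, ∀ y ∈ C, φ α x + φ α y ⊆ φ α (x + y))
    (hQhom : ∀ α (r : ℚ), 0 < r → ∀ x ∈ C, φ α ((r : ℝ) • x) = (r : ℝ) • φ α x)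
    (hlsc : ∀ α, ∀ x ∈ C, ∀ U : Set Y, IsOpen U → (φ α x ∩ U).Nonempty →
      ∃ V : Set X, IsOpen V ∧ x ∈ V ∧ ∀ y ∈ V ∩ C, (φ α y ∩ U).Nonempty)
    (hptbdd : ∀ x ∈ K, Bornology.IsVonNBounded ℝ (⋃ α, φ α x)) :
    Bornology.IsVonNBounded ℝ (⋃ α, ⋃ x ∈ K, φ α x) :=
  uniform_boundedness_superadditive_general C hCsmul K hKC hKconv hKcpt φ hne hsuper hQhom hlsc
    hptbdd
end

section
/- Let C be a convex cone with finite cone-basis E = {e₁,…,eₙ} in a real topological vector space, L the linear span of E, and Y a real finite-dimensional topological vector space. If φ : C → cc(Y) is lower semicontinuous and ℚ₊-homogeneous superadditive, then φ is positively homogeneous: φ(tx) = tφ(x) for all t > 0 and all x ∈ C. -/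
/-!
Fix `x ∈ C` and a continuous linear functional `l`, and let `h s` be the maximum of `l` on
`φ (s • x)`. By `ℚ₊`-homogeneity `h q = q * h 1` for rational `q > 0`, and lower semicontinuity
of `φ` makes `h` lower semicontinuous, so approximating `s` by rationals gives `h s ≤ s * h 1`.
Conversely, superadditivity gives `h t ≥ h q + h (t - q)` for rational `0 < q < t`, and the upper
bound applied to `-l` bounds `h (t - q)` from below by `-(t - q) * c'`, with `c'` the maximum of
`-l` on `φ x`; letting `q → t` yields `h t ≥ t * h 1`. So `φ (t • x)` and `t • φ x` have the same
support function, and by Hahn–Banach compact convex sets are determined by their support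
functions.
-/

open Pointwise Set Filter Topology

instance FiniteDimensional.locallyConvexSpace {E : Type*} [AddCommGroup E] [TopologicalSpace E]
    [IsTopologicalAddGroup E] [T2Space E] [Module ℝ E] [ContinuousSMul ℝ E]
    [FiniteDimensional ℝ E] : LocallyConvexSpace ℝ E :=
  (toEuclidean : E ≃L[ℝ] _).toHomeomorph.isInducing.locallyConvexSpace
    (f := (toEuclidean : E ≃L[ℝ] _).toLinearMap)

section SupportFunction

variable {E : Type*} [AddCommGroup E] [Module ℝ E] [TopologicalSpace E]

theorem subset_of_forall_sSup_image_le [IsTopologicalAddGroup E] [ContinuousSMul ℝ E]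
    [LocallyConvexSpace ℝ E] [T2Space E] {A B : Set E} (hA : IsCompact A) (hB : IsCompact B)
    (hBconv : Convex ℝ B) (hBne : B.Nonempty)
    (h : ∀ l : StrongDual ℝ E, sSup (l '' A) ≤ sSup (l '' B)) : A ⊆ B := by
  rw [← iInter_halfSpaces_eq hBconv hB.isClosed]
  refine fun a ha => mem_iInter.2 fun l => ?_
  obtain ⟨b, hb, hlb⟩ := (hB.image l.continuous).sSup_mem (hBne.image l)
  refine ⟨b, hb, ?_⟩
  rw [hlb]
  exact (le_csSup (hA.image l.continuous).bddAbove (mem_image_of_mem l ha)).trans (h l)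

theorem eq_of_forall_sSup_image_eq [IsTopologicalAddGroup E] [ContinuousSMul ℝ E]
    [LocallyConvexSpace ℝ E] [T2Space E] {A B : Set E} (hA : IsCompact A) (hAconv : Convex ℝ A)
    (hAne : A.Nonempty) (hB : IsCompact B) (hBconv : Convex ℝ B) (hBne : B.Nonempty)
    (h : ∀ l : StrongDual ℝ E, sSup (l '' A) = sSup (l '' B)) : A = B :=
  (subset_of_forall_sSup_image_le hA hB hBconv hBne fun l => (h l).le).antisymm
    (subset_of_forall_sSup_image_le hB hA hAconv hAne fun l => (h l).ge)

theorem sSup_image_smul_set (l : StrongDual ℝ E) {r : ℝ} (hr : 0 ≤ r) (A : Set E) :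
    sSup (l '' (r • A)) = r * sSup (l '' A) := by
  rw [image_smul_set, Real.sSup_smul_of_nonneg hr, smul_eq_mul]

theorem sSup_image_add_sSup_image_le (l : StrongDual ℝ E) {A B D : Set E} (hA : IsCompact A)
    (hAne : A.Nonempty) (hB : IsCompact B) (hBne : B.Nonempty) (hD : IsCompact D)
    (hABD : A + B ⊆ D) : sSup (l '' A) + sSup (l '' B) ≤ sSup (l '' D) := by
  rw [← csSup_add (hAne.image l) (hA.image l.continuous).bddAbove (hBne.image l)
    (hB.image l.continuous).bddAbove, ← image_add]
  exact csSup_le_csSup (hD.image l.continuous).bddAbove ((hAne.add hBne).image l)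
    (image_mono hABD)

theorem neg_sSup_image_neg_le (l : StrongDual ℝ E) {A : Set E} (hA : IsCompact A)
    (hAne : A.Nonempty) : -sSup ((-l) '' A) ≤ sSup (l '' A) := by
  obtain ⟨a, ha⟩ := hAne
  have hneg := le_csSup (hA.image (-l).continuous).bddAbove (mem_image_of_mem (-l) ha)
  have hpos := le_csSup (hA.image l.continuous).bddAbove (mem_image_of_mem l ha)
  rw [neg_apply] at hneg
  linarith

end SupportFunction

theorem lowerSemicontinuousAt_sSup_image {Z Y : Type*} [TopologicalSpace Z] [TopologicalSpace Y]
    {Ψ : Z → Set Y} {l : Y → ℝ} {z : Z} (hl : Continuous l) (hΨ : LowerHemicontinuousAt Ψ z)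
    (hne : (Ψ z).Nonempty) (hbdd : ∀ᶠ z' in 𝓝 z, BddAbove (l '' Ψ z')) :
    LowerSemicontinuousAt (fun z' => sSup (l '' Ψ z')) z := by
  intro y hy
  obtain ⟨_, ⟨a, ha, rfl⟩, hya⟩ := exists_lt_of_lt_csSup (hne.image l) hy
  filter_upwards [lowerHemicontinuousAt_iff.1 hΨ _ (isOpen_Ioi.preimage hl) ⟨a, ha, hya⟩, hbdd]
    with z' ⟨b, hbΨ, hb⟩ hbdd'
  exact hb.trans_le (le_csSup hbdd' (mem_image_of_mem l hbΨ))

theorem exists_rat_btwn_of_eventually {P : ℝ → Prop} {a t : ℝ} (hat : a < t)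
    (hP : ∀ᶠ u in 𝓝 t, P u) : ∃ q : ℚ, a < q ∧ (q : ℝ) < t ∧ P q := by
  obtain ⟨ε, hε, hball⟩ := Metric.eventually_nhds_iff.1 hP
  obtain ⟨q, hq₁, hq₂⟩ := exists_rat_btwn (max_lt hat (sub_lt_self t hε))
  refine ⟨q, (le_max_left _ _).trans_lt hq₁, hq₂, hball ?_⟩
  rw [Real.dist_eq, abs_sub_lt_iff]
  constructor <;> linarith [le_max_right a (t - ε)]

theorem le_mul_of_lowerSemicontinuousAt_of_rat {g : ℝ → ℝ} {c s : ℝ}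
    (hg : ∀ q : ℚ, 0 < q → g q = q * c) (hlsc : LowerSemicontinuousAt g s) (hs : 0 < s) :
    g s ≤ s * c := by
  by_contra! h
  obtain ⟨y, hsy, hyg⟩ := exists_between h
  have hnear : ∀ᶠ u in 𝓝 s, u * c < y ∧ y < g u :=
    ((continuous_mul_const c).continuousAt.eventually_lt continuousAt_const hsy).and (hlsc y hyg)
  obtain ⟨q, hq, -, hqy, hyq⟩ := exists_rat_btwn_of_eventually hs hnear
  rw [hg q (by exact_mod_cast hq)] at hyq
  linarith

theorem mul_le_of_superadditive_of_rat {g : ℝ → ℝ} {c c' t : ℝ}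
    (hg : ∀ q : ℚ, 0 < q → g q = q * c)
    (hadd : ∀ a b, 0 < a → 0 < b → g a + g b ≤ g (a + b))
    (hlow : ∀ s, 0 < s → -(s * c') ≤ g s) (ht : 0 < t) : t * c ≤ g t := by
  by_contra! h
  have hnear : ∀ᶠ u in 𝓝 t, g t < u * c - (t - u) * c' :=
    continuousAt_const.eventually_lt (by fun_prop) (by simpa using h)
  obtain ⟨q, hq, hqt, hgq⟩ := exists_rat_btwn_of_eventually ht hnear
  have hsplit := hadd q (t - q) (by exact_mod_cast hq) (sub_pos.2 hqt)
  rw [add_sub_cancel, hg q (by exact_mod_cast hq)] at hsplit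
  linarith [hlow (t - q) (sub_pos.2 hqt)]

section Ray

variable {Y : Type*} [AddCommGroup Y] [Module ℝ Y] [TopologicalSpace Y]

theorem sSup_image_eq_mul_of_rat_homogeneous {Ψ : ℝ → Set Y} (l : StrongDual ℝ Y)
    (hne : ∀ s, 0 < s → (Ψ s).Nonempty) (hcpt : ∀ s, 0 < s → IsCompact (Ψ s))
    (hsuper : ∀ a b, 0 < a → 0 < b → Ψ a + Ψ b ⊆ Ψ (a + b))
    (hQ : ∀ q : ℚ, 0 < q → Ψ q = (q : ℝ) • Ψ 1)
    (hlsc : ∀ s, 0 < s → LowerHemicontinuousAt Ψ s)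
    {t : ℝ} (ht : 0 < t) : sSup (l '' Ψ t) = t * sSup (l '' Ψ 1) := by
  have hrat : ∀ m : StrongDual ℝ Y, ∀ q : ℚ, 0 < q → sSup (m '' Ψ q) = q * sSup (m '' Ψ 1) :=
    fun m q hq => by rw [hQ q hq, sSup_image_smul_set m (by positivity)]
  have hle : ∀ m : StrongDual ℝ Y, ∀ s, 0 < s → sSup (m '' Ψ s) ≤ s * sSup (m '' Ψ 1) :=
    fun m s hs => le_mul_of_lowerSemicontinuousAt_of_rat (hrat m)
      (lowerSemicontinuousAt_sSup_image m.continuous (hlsc s hs) (hne s hs)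
        (by filter_upwards [Ioi_mem_nhds hs] with s' hs' using
          ((hcpt s' hs').image m.continuous).bddAbove)) hs
  have hadd : ∀ a b, 0 < a → 0 < b →
      sSup (l '' Ψ a) + sSup (l '' Ψ b) ≤ sSup (l '' Ψ (a + b)) := fun a b ha hb =>
    sSup_image_add_sSup_image_le l (hcpt a ha) (hne a ha) (hcpt b hb) (hne b hb)
      (hcpt _ (add_pos ha hb)) (hsuper a b ha hb)
  have hlow : ∀ s, 0 < s → -(s * sSup ((-l) '' Ψ 1)) ≤ sSup (l '' Ψ s) := fun s hs =>
    (neg_le_neg (hle (-l) s hs)).trans (neg_sSup_image_neg_le l (hcpt s hs) (hne s hs))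
  exact (hle l t ht).antisymm
    (mul_le_of_superadditive_of_rat (g := fun s => sSup (l '' Ψ s)) (hrat l) hadd hlow ht)

theorem eq_smul_of_rat_homogeneous [IsTopologicalAddGroup Y] [ContinuousSMul ℝ Y]
    [LocallyConvexSpace ℝ Y] [T2Space Y] {Ψ : ℝ → Set Y}
    (hne : ∀ s, 0 < s → (Ψ s).Nonempty) (hcpt : ∀ s, 0 < s → IsCompact (Ψ s))
    (hconv : ∀ s, 0 < s → Convex ℝ (Ψ s))
    (hsuper : ∀ a b, 0 < a → 0 < b → Ψ a + Ψ b ⊆ Ψ (a + b))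
    (hQ : ∀ q : ℚ, 0 < q → Ψ q = (q : ℝ) • Ψ 1)
    (hlsc : ∀ s, 0 < s → LowerHemicontinuousAt Ψ s)
    {t : ℝ} (ht : 0 < t) : Ψ t = t • Ψ 1 := by
  refine eq_of_forall_sSup_image_eq (hcpt t ht) (hconv t ht) (hne t ht)
    ((hcpt 1 one_pos).smul t) ((hconv 1 one_pos).smul t) ((hne 1 one_pos).smul_set) fun l => ?_
  rw [sSup_image_smul_set l ht.le,
    sSup_image_eq_mul_of_rat_homogeneous l hne hcpt hsuper hQ hlsc ht]

end Ray

theorem Qpos_homog_superadditive_is_pos_homog_general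
    {X : Type*} [AddCommGroup X] [Module ℝ X] [TopologicalSpace X]
    [ContinuousSMul ℝ X]
    {Y : Type*} [AddCommGroup Y] [Module ℝ Y] [TopologicalSpace Y]
    [IsTopologicalAddGroup Y] [ContinuousSMul ℝ Y] [T2Space Y]
    [FiniteDimensional ℝ Y]
    {n : ℕ} (e : Fin n → X)
    (C : Set X)
    (hC : C = {x | ∃ lam : Fin n → ℝ, (∀ i, 0 ≤ lam i) ∧ x = ∑ i, lam i • e i})
    (φ : X → Set Y)
    (hne : ∀ x ∈ C, (φ x).Nonempty)
    (hcpt : ∀ x ∈ C, IsCompact (φ x))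
    (hconv : ∀ x ∈ C, Convex ℝ (φ x))
    (hsuper : ∀ x ∈ C, ∀ y ∈ C, φ x + φ y ⊆ φ (x + y))
    (hQhom : ∀ (r : ℚ), 0 < r → ∀ x ∈ C, φ ((r : ℝ) • x) = (r : ℝ) • φ x)
    (hlsc : ∀ x ∈ C, ∀ U : Set Y, IsOpen U → (φ x ∩ U).Nonempty →
      ∃ V : Set X, IsOpen V ∧ x ∈ V ∧ ∀ y ∈ V ∩ C, (φ y ∩ U).Nonempty) :
    ∀ (t : ℝ), 0 < t → ∀ x ∈ C, φ (t • x) = t • φ x := by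
  intro t ht x hx
  have hray : ∀ s : ℝ, 0 ≤ s → s • x ∈ C := by
    subst hC
    obtain ⟨lam, hlam, rfl⟩ := hx
    exact fun s hs => ⟨s • lam, fun i => mul_nonneg hs (hlam i), by
      simp [Finset.smul_sum, smul_smul]⟩
  have hlsc_ray : ∀ s : ℝ, 0 < s → LowerHemicontinuousAt (fun s => φ (s • x)) s := by
    refine fun s hs => lowerHemicontinuousAt_iff.2 fun U hU hmeet => ?_
    obtain ⟨V, hVopen, hsV, hV⟩ := hlsc _ (hray s hs.le) U hU hmeet
    filter_upwards [(hVopen.preimage (continuous_id.smul continuous_const)).mem_nhds hsV,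
      Ioi_mem_nhds hs] with s' hs'V hs'
    exact hV _ ⟨hs'V, hray s' hs'.le⟩
  simpa using eq_smul_of_rat_homogeneous (Ψ := fun s => φ (s • x))
    (fun s hs => hne _ (hray s hs.le)) (fun s hs => hcpt _ (hray s hs.le))
    (fun s hs => hconv _ (hray s hs.le))
    (fun a b ha hb => add_smul a b x ▸ hsuper _ (hray a ha.le) _ (hray b hb.le))
    (fun q hq => by simpa using hQhom q hq x hx) hlsc_ray ht

/-- a lower semicontinuous, `ℚ₊`-homogeneous superadditive correspondence
with nonempty compact convex values in a finite-dimensional real TVS, defined on a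
convex cone with finite cone-basis, is positively homogeneous. -/
theorem Qpos_homog_superadditive_is_pos_homog
    {X : Type*} [AddCommGroup X] [Module ℝ X] [TopologicalSpace X]
    [IsTopologicalAddGroup X] [ContinuousSMul ℝ X]
    {Y : Type*} [AddCommGroup Y] [Module ℝ Y] [TopologicalSpace Y]
    [IsTopologicalAddGroup Y] [ContinuousSMul ℝ Y] [T2Space Y]
    [FiniteDimensional ℝ Y]
    {n : ℕ} (e : Fin n → X) (he : LinearIndependent ℝ e)
    (C : Set X)
    (hC : C = {x | ∃ lam : Fin n → ℝ, (∀ i, 0 ≤ lam i) ∧ x = ∑ i, lam i • e i})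
    (φ : X → Set Y)
    (hne : ∀ x ∈ C, (φ x).Nonempty)
    (hcpt : ∀ x ∈ C, IsCompact (φ x))
    (hconv : ∀ x ∈ C, Convex ℝ (φ x))
    (hsuper : ∀ x ∈ C, ∀ y ∈ C, φ x + φ y ⊆ φ (x + y))
    (hQhom : ∀ (r : ℚ), 0 < r → ∀ x ∈ C, φ ((r : ℝ) • x) = (r : ℝ) • φ x)
    (hlsc : ∀ x ∈ C, ∀ U : Set Y, IsOpen U → (φ x ∩ U).Nonempty →
      ∃ V : Set X, IsOpen V ∧ x ∈ V ∧ ∀ y ∈ V ∩ C, (φ y ∩ U).Nonempty) :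
    ∀ (t : ℝ), 0 < t → ∀ x ∈ C, φ (t • x) = t • φ x :=
  Qpos_homog_superadditive_is_pos_homog_general e C hC φ hne hcpt hconv hsuper hQhom hlsc
end

section
/- Let C be a convex cone with finite cone-basis in a real topological vector space X, let L be the span of the basis, and let φ : C → cc(ℝ) (nonempty compact convex values in ℝ) be lower semicontinuous, ℚ₊-homogeneous, and superadditive. Then φ is continuous (both upper and lower semicontinuous) at every point of the interior of C relative to L. -/
/-!
Write `f = sInf ∘ φ` and `g = sSup ∘ φ`, so that `φ x = [f x, g x]`. Lower hemicontinuity of `φ`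
makes `g` lower and `f` upper semicontinuous, and upper hemicontinuity of `φ` at `x` amounts to
the reverse semicontinuity of `f` and `g` there. For `y ∈ C` near a relative interior point `x`,
the reflection `z = 2x - y` is again in `C` and near `x`; superadditivity together with
`φ (2x) = 2 φ x` gives `g y ≤ 2 g x - g z` and `f y ≥ 2 f x - f z`, so the known semicontinuity
at `z` transfers to the missing one at `y`.
-/

open Set Filter Topology Pointwise

section Semicontinuity

variable {α : Type*} [TopologicalSpace α] {s : Set α} {x : α}

theorem LowerHemicontinuousWithinAt.lowerSemicontinuousWithinAt_sSup {φ : α → Set ℝ}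
    (h : LowerHemicontinuousWithinAt φ s x) (hx : (φ x).Nonempty)
    (hbdd : ∀ y ∈ s, BddAbove (φ y)) :
    LowerSemicontinuousWithinAt (fun y => sSup (φ y)) s x := by
  intro b hb
  obtain ⟨t, ht, hbt⟩ := exists_lt_of_lt_csSup hx hb
  filter_upwards [lowerHemicontinuousWithinAt_iff.1 h (Ioi b) isOpen_Ioi ⟨t, ht, hbt⟩,
    self_mem_nhdsWithin] with y ⟨t', ht', hbt'⟩ hy
  exact lt_of_lt_of_le hbt' (le_csSup (hbdd y hy) ht')

theorem LowerHemicontinuousWithinAt.upperSemicontinuousWithinAt_sInf {φ : α → Set ℝ}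
    (h : LowerHemicontinuousWithinAt φ s x) (hx : (φ x).Nonempty)
    (hbdd : ∀ y ∈ s, BddBelow (φ y)) :
    UpperSemicontinuousWithinAt (fun y => sInf (φ y)) s x := by
  intro b hb
  obtain ⟨t, ht, htb⟩ := exists_lt_of_csInf_lt hx hb
  filter_upwards [lowerHemicontinuousWithinAt_iff.1 h (Iio b) isOpen_Iio ⟨t, ht, htb⟩,
    self_mem_nhdsWithin] with y ⟨t', ht', htb'⟩ hy
  exact lt_of_le_of_lt (csInf_le (hbdd y hy) ht') htb'

end Semicontinuity

theorem exists_Ioo_subset_of_Icc_subset {β : Type*} [LinearOrder β] [TopologicalSpace β]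
    [OrderTopology β] [NoMinOrder β] [NoMaxOrder β] {U : Set β} {a b : β}
    (hU : IsOpen U) (hab : a ≤ b) (h : Icc a b ⊆ U) :
    ∃ l < a, ∃ u > b, Ioo l u ⊆ U := by
  obtain ⟨l, hl, hlU⟩ := exists_Ioc_subset_of_mem_nhds (hU.mem_nhds (h ⟨le_rfl, hab⟩))
    (exists_lt a)
  obtain ⟨u, hu, huU⟩ := exists_Ico_subset_of_mem_nhds (hU.mem_nhds (h ⟨hab, le_rfl⟩))
    (exists_gt b)
  refine ⟨l, hl, u, hu, fun t ht => ?_⟩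
  rcases le_or_gt t a with hta | hat
  · exact hlU ⟨ht.1, hta⟩
  rcases le_or_gt t b with htb | hbt
  · exact h ⟨hat.le, htb⟩
  · exact huU ⟨hbt.le, ht.2⟩

theorem upperHemicontinuousWithinAt_of_subset_Icc {α : Type*} [TopologicalSpace α]
    {s : Set α} {x : α} {φ : α → Set ℝ} {f g : α → ℝ}
    (hφ : ∀ y ∈ s, φ y ⊆ Icc (f y) (g y)) (hx : Icc (f x) (g x) ⊆ φ x) (hfg : f x ≤ g x)
    (hf : LowerSemicontinuousWithinAt f s x) (hg : UpperSemicontinuousWithinAt g s x) :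
    UpperHemicontinuousWithinAt φ s x := by
  refine upperHemicontinuousWithinAt_iff_forall_isOpen.2 fun U hU hxU => ?_
  obtain ⟨l, hl, u, hu, hlu⟩ := exists_Ioo_subset_of_Icc_subset hU hfg (hx.trans hxU)
  filter_upwards [hf l hl, hg u hu, self_mem_nhdsWithin] with y hly hyu hy
  exact (hφ y hy).trans ((Icc_subset_Ioo hly hyu).trans hlu)

section Reflection

variable {G : Type*} [AddCommGroup G] [TopologicalSpace G] {C : Set G} {x : G}

theorem tendsto_add_self_sub_nhdsWithin [IsTopologicalAddGroup G] {L : AddSubgroup G}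
    {U : Set G} (hCL : C ⊆ L) (hxL : x ∈ L) (hU : IsOpen U) (hxU : x ∈ U) (hUC : U ∩ L ⊆ C) :
    Tendsto (fun y => x + x - y) (𝓝[C] x) (𝓝[C] x) := by
  have hcont : Tendsto (fun y => x + x - y) (𝓝 x) (𝓝 x) := by
    simpa using (continuous_const.sub continuous_id).tendsto (f := fun y => x + x - y) x
  refine tendsto_nhdsWithin_iff.2 ⟨hcont.mono_left nhdsWithin_le_nhds, ?_⟩
  filter_upwards [self_mem_nhdsWithin, nhdsWithin_le_nhds (hcont (hU.mem_nhds hxU))]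
    with y hyC hyU
  exact hUC ⟨hyU, L.sub_mem (L.add_mem hxL hxL) (hCL hyC)⟩

/-- `g y ≤ g (x + x) - g (x + x - y) ≤ 2 g x - g (x + x - y)`, and the reflected point
`x + x - y` stays near `x` in `C`, where `g` is almost at least `g x`. -/
theorem upperSemicontinuousWithinAt_of_superadditive {g : G → ℝ}
    (hrefl : Tendsto (fun y => x + x - y) (𝓝[C] x) (𝓝[C] x))
    (hsuper : ∀ y ∈ C, ∀ z ∈ C, g y + g z ≤ g (y + z)) (hdouble : g (x + x) ≤ g x + g x)
    (hg : LowerSemicontinuousWithinAt g C x) :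
    UpperSemicontinuousWithinAt g C x := by
  intro b hb
  filter_upwards [hrefl.eventually (hg (g x + g x - b) (by linarith)),
    hrefl.eventually self_mem_nhdsWithin, self_mem_nhdsWithin] with y hlt hzC hyC
  have := hsuper y hyC _ hzC
  rw [add_sub_cancel] at this
  linarith

theorem lowerSemicontinuousWithinAt_of_subadditive {f : G → ℝ}
    (hrefl : Tendsto (fun y => x + x - y) (𝓝[C] x) (𝓝[C] x))
    (hsub : ∀ y ∈ C, ∀ z ∈ C, f (y + z) ≤ f y + f z) (hdouble : f x + f x ≤ f (x + x))
    (hf : UpperSemicontinuousWithinAt f C x) :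
    LowerSemicontinuousWithinAt f C x := by
  rw [← upperSemicontinuousWithinAt_neg_iff]
  refine upperSemicontinuousWithinAt_of_superadditive hrefl (fun y hy z hz => ?_) ?_ hf.neg
  · simp only [Pi.neg_apply]
    linarith [hsub y hy z hz]
  · simp only [Pi.neg_apply]
    linarith

end Reflection

theorem csSup_add_csSup_le_of_add_subset {M : Type*} [ConditionallyCompleteLattice M]
    [AddGroup M] [AddLeftMono M] [AddRightMono M] {s t u : Set M} (hs : s.Nonempty)
    (hs' : BddAbove s) (ht : t.Nonempty) (ht' : BddAbove t) (hu : BddAbove u) (h : s + t ⊆ u) :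
    sSup s + sSup t ≤ sSup u :=
  csSup_add hs hs' ht ht' ▸ csSup_le_csSup hu (hs.add ht) h

theorem csInf_le_csInf_add_csInf_of_add_subset {M : Type*} [ConditionallyCompleteLattice M]
    [AddGroup M] [AddLeftMono M] [AddRightMono M] {s t u : Set M} (hs : s.Nonempty)
    (hs' : BddBelow s) (ht : t.Nonempty) (ht' : BddBelow t) (hu : BddBelow u) (h : s + t ⊆ u) :
    sInf u ≤ sInf s + sInf t :=
  csInf_add hs hs' ht ht' ▸ csInf_le_csInf hu (hs.add ht) h

theorem exists_nonneg_sum_smul_add {ι M : Type*} [Fintype ι] [AddCommMonoid M] [Module ℝ M]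
    {e : ι → M} {y z : M}
    (hy : ∃ lam : ι → ℝ, (∀ i, 0 ≤ lam i) ∧ y = ∑ i, lam i • e i)
    (hz : ∃ lam : ι → ℝ, (∀ i, 0 ≤ lam i) ∧ z = ∑ i, lam i • e i) :
    ∃ lam : ι → ℝ, (∀ i, 0 ≤ lam i) ∧ y + z = ∑ i, lam i • e i := by
  obtain ⟨lam, hlam, rfl⟩ := hy
  obtain ⟨mu, hmu, rfl⟩ := hz
  exact ⟨lam + mu, fun i => add_nonneg (hlam i) (hmu i), by
    simp only [Pi.add_apply, add_smul, Finset.sum_add_distrib]⟩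

theorem superadditive_continuous_on_relative_interior_general
    {X : Type*} [AddCommGroup X] [Module ℝ X] [TopologicalSpace X]
    [IsTopologicalAddGroup X]
    {n : ℕ} (e : Fin n → X)
    (C : Set X)
    (hC : C = {x | ∃ lam : Fin n → ℝ, (∀ i, 0 ≤ lam i) ∧ x = ∑ i, lam i • e i})
    (L : Submodule ℝ X) (hL : L = Submodule.span ℝ (Set.range e))
    (intL : Set X)
    (hintL : intL = {x | x ∈ C ∧ ∃ U : Set X, IsOpen U ∧ x ∈ U ∧
      U ∩ (L : Set X) ⊆ C})
    (φ : X → Set ℝ)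
    (hne : ∀ x ∈ C, (φ x).Nonempty)
    (hcpt : ∀ x ∈ C, IsCompact (φ x))
    (hconv : ∀ x ∈ C, Convex ℝ (φ x))
    (hsuper : ∀ x ∈ C, ∀ y ∈ C, φ x + φ y ⊆ φ (x + y))
    (hQhom : ∀ (r : ℚ), 0 < r → ∀ x ∈ C, φ ((r : ℝ) • x) = (r : ℝ) • φ x)
    (hlsc : ∀ x ∈ C, ∀ U : Set ℝ, IsOpen U → (φ x ∩ U).Nonempty →
      ∃ V : Set X, IsOpen V ∧ x ∈ V ∧ ∀ y ∈ V ∩ C, (φ y ∩ U).Nonempty) :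
    ∀ x ∈ intL,
      (∀ U : Set ℝ, IsOpen U → φ x ⊆ U →
        ∃ V : Set X, IsOpen V ∧ x ∈ V ∧ ∀ y ∈ V ∩ C, φ y ⊆ U) ∧
      (∀ U : Set ℝ, IsOpen U → (φ x ∩ U).Nonempty →
        ∃ V : Set X, IsOpen V ∧ x ∈ V ∧ ∀ y ∈ V ∩ C, (φ y ∩ U).Nonempty) := by
  intro x hx
  rw [hintL] at hx
  obtain ⟨hxC, U, hU, hxU, hUC⟩ := hx
  have hCL : C ⊆ L.toAddSubgroup := by
    rw [hC, hL]
    exact fun _ ⟨lam, _, hy⟩ => (Submodule.mem_span_range_iff_exists_fun ℝ).2 ⟨lam, hy.symm⟩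
  have hCadd : ∀ y ∈ C, ∀ z ∈ C, y + z ∈ C := by
    rw [hC]
    exact fun y hy z hz => exists_nonneg_sum_smul_add hy hz
  have hrefl := tendsto_add_self_sub_nhdsWithin hCL (hCL hxC) hU hxU hUC
  have hlhc : LowerHemicontinuousWithinAt φ C x :=
    lowerHemicontinuousWithinAt_iff.2 fun V hV h => mem_nhdsWithin.2 (hlsc x hxC V hV h)
  have hdouble : φ (x + x) = (2 : ℝ) • φ x := by simpa [two_smul] using hQhom 2 two_pos x hxC
  have hb : ∀ y ∈ C, Bornology.IsBounded (φ y) := fun y hy => (hcpt y hy).isBounded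
  have hsSup : UpperSemicontinuousWithinAt (fun y => sSup (φ y)) C x :=
    upperSemicontinuousWithinAt_of_superadditive hrefl
      (fun y hy z hz => csSup_add_csSup_le_of_add_subset (hne y hy) (hb y hy).bddAbove
        (hne z hz) (hb z hz).bddAbove (hb _ (hCadd y hy z hz)).bddAbove (hsuper y hy z hz))
      (by rw [hdouble, Real.sSup_smul_of_nonneg zero_le_two, two_smul])
      (hlhc.lowerSemicontinuousWithinAt_sSup (hne x hxC) fun y hy => (hb y hy).bddAbove)
  have hsInf : LowerSemicontinuousWithinAt (fun y => sInf (φ y)) C x :=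
    lowerSemicontinuousWithinAt_of_subadditive hrefl
      (fun y hy z hz => csInf_le_csInf_add_csInf_of_add_subset (hne y hy) (hb y hy).bddBelow
        (hne z hz) (hb z hz).bddBelow (hb _ (hCadd y hy z hz)).bddBelow (hsuper y hy z hz))
      (by rw [hdouble, Real.sInf_smul_of_nonneg zero_le_two, two_smul])
      (hlhc.upperSemicontinuousWithinAt_sInf (hne x hxC) fun y hy => (hb y hy).bddBelow)
  have huhc : UpperHemicontinuousWithinAt φ C x :=
    upperHemicontinuousWithinAt_of_subset_Icc (fun y hy => (hb y hy).subset_Icc_sInf_sSup)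
      (eq_Icc_of_connected_compact ((hconv x hxC).isConnected (hne x hxC)) (hcpt x hxC)).ge
      (csInf_le_csSup (hne x hxC) (hb x hxC).bddBelow (hb x hxC).bddAbove) hsInf hsSup
  exact ⟨fun V hV hxV => mem_nhdsWithin.1 (huhc.forall_isOpen V hV hxV), hlsc x hxC⟩

/-- Lemma 2: a lower semicontinuous, `ℚ₊`-homogeneous superadditive
correspondence with nonempty compact convex values in `ℝ`, on a convex cone with
finite cone-basis, is continuous (upper and lower semicontinuous) at every point of
the interior of `C` relative to `L = span E`. -/
theorem superadditive_continuous_on_relative_interior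
    {X : Type*} [AddCommGroup X] [Module ℝ X] [TopologicalSpace X]
    [IsTopologicalAddGroup X] [ContinuousSMul ℝ X]
    {n : ℕ} (e : Fin n → X) (he : LinearIndependent ℝ e)
    (C : Set X)
    (hC : C = {x | ∃ lam : Fin n → ℝ, (∀ i, 0 ≤ lam i) ∧ x = ∑ i, lam i • e i})
    (L : Submodule ℝ X) (hL : L = Submodule.span ℝ (Set.range e))
    (intL : Set X)
    (hintL : intL = {x | x ∈ C ∧ ∃ U : Set X, IsOpen U ∧ x ∈ U ∧
      U ∩ (L : Set X) ⊆ C})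
    (φ : X → Set ℝ)
    (hne : ∀ x ∈ C, (φ x).Nonempty)
    (hcpt : ∀ x ∈ C, IsCompact (φ x))
    (hconv : ∀ x ∈ C, Convex ℝ (φ x))
    (hsuper : ∀ x ∈ C, ∀ y ∈ C, φ x + φ y ⊆ φ (x + y))
    (hQhom : ∀ (r : ℚ), 0 < r → ∀ x ∈ C, φ ((r : ℝ) • x) = (r : ℝ) • φ x)
    (hlsc : ∀ x ∈ C, ∀ U : Set ℝ, IsOpen U → (φ x ∩ U).Nonempty →
      ∃ V : Set X, IsOpen V ∧ x ∈ V ∧ ∀ y ∈ V ∩ C, (φ y ∩ U).Nonempty) :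
    ∀ x ∈ intL,
      (∀ U : Set ℝ, IsOpen U → φ x ⊆ U →
        ∃ V : Set X, IsOpen V ∧ x ∈ V ∧ ∀ y ∈ V ∩ C, φ y ⊆ U) ∧
      (∀ U : Set ℝ, IsOpen U → (φ x ∩ U).Nonempty →
        ∃ V : Set X, IsOpen V ∧ x ∈ V ∧ ∀ y ∈ V ∩ C, (φ y ∩ U).Nonempty) :=
  superadditive_continuous_on_relative_interior_general e C hC L hL intL hintL φ hne hcpt hconv
    hsuper hQhom hlsc
end

section
/- Let g : C → ℝ be a Jensen-convex function on a convex cone C with finite cone-basis in a real topological vector space, and suppose g is bounded above on a neighborhood (relative to L = span of the basis) of some point x₀ ∈ int_L C. Then g is continuous on int_L C. -/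
open Filter Topology

/-!
Midpoint convexity iterates to the convexity inequality at the dyadic weights `2⁻ᵏ`. Writing a
point `x` of the relative interior as `(1 - t) z + t x₀` with `z ∈ C` and `t` dyadic, the homothety
of ratio `t` centred at `z` carries a relative neighbourhood of `x₀`, on which `g ≤ M`, onto one of
`x`, so `g` is bounded above near `x` as well. Near such a point `x`, for `y` close to `x` both
`y = (1 - s) x + s z'` and `x = (1 - s) y + s w` with `z'`, `w` still in the region where `g ≤ M`,
which squeezes `|g y - g x|` below a multiple of `s`.
-/

section MidpointConvex

variable {X : Type*} [AddCommGroup X] [Module ℝ X]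

def MidpointConvexOn (C : Set X) (g : X → ℝ) : Prop :=
  ∀ x ∈ C, ∀ y ∈ C, g ((1 / 2 : ℝ) • (x + y)) ≤ (g x + g y) / 2

theorem MidpointConvexOn.le_dyadic {C : Set X} {g : X → ℝ} (hC : Convex ℝ C)
    (hg : MidpointConvexOn C g) (k : ℕ) {x y : X} (hx : x ∈ C) (hy : y ∈ C) :
    g ((1 - (1 / 2 : ℝ) ^ k) • x + (1 / 2 : ℝ) ^ k • y)
      ≤ (1 - (1 / 2 : ℝ) ^ k) * g x + (1 / 2 : ℝ) ^ k * g y := by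
  induction k with
  | zero => simp
  | succ k ih =>
    have hmem : (1 - (1 / 2 : ℝ) ^ k) • x + (1 / 2 : ℝ) ^ k • y ∈ C :=
      hC hx hy (by linarith [pow_le_one₀ (n := k) (by norm_num : (0 : ℝ) ≤ 1 / 2) (by norm_num)])
        (by positivity) (by ring)
    have hmid : (1 - (1 / 2 : ℝ) ^ (k + 1)) • x + (1 / 2 : ℝ) ^ (k + 1) • y
        = (1 / 2 : ℝ) • (x + ((1 - (1 / 2 : ℝ) ^ k) • x + (1 / 2 : ℝ) ^ k • y)) := by
      rw [pow_succ]; module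
    rw [hmid]
    calc _ ≤ (g x + g ((1 - (1 / 2 : ℝ) ^ k) • x + (1 / 2 : ℝ) ^ k • y)) / 2 := hg x hx _ hmem
      _ ≤ (g x + ((1 - (1 / 2 : ℝ) ^ k) * g x + (1 / 2 : ℝ) ^ k * g y)) / 2 := by linarith
      _ = _ := by rw [pow_succ]; ring

theorem one_sub_smul_add_smul_add_inv_smul_sub {s : ℝ} (hs : s ≠ 0) (a b : X) :
    (1 - s) • a + s • (a + s⁻¹ • (b - a)) = b := by
  rw [smul_add, smul_smul, mul_inv_cancel₀ hs, one_smul]; module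

end MidpointConvex

section Cone

variable {X ι : Type*} [AddCommGroup X] [Module ℝ X] [Fintype ι]

theorem convex_setOf_nonneg_sum_smul (e : ι → X) :
    Convex ℝ {x | ∃ lam : ι → ℝ, (∀ i, 0 ≤ lam i) ∧ x = ∑ i, lam i • e i} := by
  rintro _ ⟨lx, hlx, rfl⟩ _ ⟨ly, hly, rfl⟩ a b ha hb -
  refine ⟨a • lx + b • ly, fun i => add_nonneg (mul_nonneg ha (hlx i)) (mul_nonneg hb (hly i)), ?_⟩
  simp only [Finset.smul_sum, ← Finset.sum_add_distrib, Pi.add_apply, Pi.smul_apply, smul_eq_mul,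
    add_smul, smul_smul]

theorem setOf_nonneg_sum_smul_subset_span (e : ι → X) :
    {x | ∃ lam : ι → ℝ, (∀ i, 0 ≤ lam i) ∧ x = ∑ i, lam i • e i}
      ⊆ Submodule.span ℝ (Set.range e) := by
  rintro _ ⟨lam, -, rfl⟩
  exact Submodule.sum_mem _ fun i _ => Submodule.smul_mem _ _ (Submodule.subset_span ⟨i, rfl⟩)

end Cone

section Topology

variable {X : Type*} [AddCommGroup X] [Module ℝ X] [TopologicalSpace X] [IsTopologicalAddGroup X]
  {L : Submodule ℝ X}

theorem Submodule.tendsto_add_smul_sub_nhdsWithin [ContinuousConstSMul ℝ X] {a b : X}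
    (ha : a ∈ L) (hb : b ∈ L) (c : ℝ) :
    Tendsto (fun y => a + c • (y - b)) (𝓝[L] b) (𝓝[L] a) := by
  have hcont : Tendsto (fun y => a + c • (y - b)) (𝓝 b) (𝓝 a) := by
    simpa using ((continuous_id.sub (continuous_const (y := b))).const_smul c
      |>.const_add a |>.tendsto b)
  exact tendsto_nhdsWithin_iff.2 ⟨hcont.mono_left nhdsWithin_le_nhds,
    eventually_mem_nhdsWithin.mono fun y hy => L.add_mem ha (L.smul_mem c (L.sub_mem hy hb))⟩

theorem Submodule.tendsto_add_smul_nhdsWithin [ContinuousSMul ℝ X] {a v : X}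
    (ha : a ∈ L) (hv : v ∈ L) : Tendsto (fun c : ℝ => a + c • v) (𝓝 0) (𝓝[L] a) := by
  have hcont : Tendsto (fun c : ℝ => a + c • v) (𝓝 0) (𝓝 a) := by
    simpa using ((continuous_id.smul continuous_const).const_add a |>.tendsto (0 : ℝ))
  exact tendsto_nhdsWithin_iff.2 ⟨hcont, .of_forall fun c => L.add_mem ha (L.smul_mem c hv)⟩

namespace MidpointConvexOn

variable {C : Set X} {g : X → ℝ}

theorem exists_eventually_le_of_eventually_le [ContinuousSMul ℝ X] (hC : Convex ℝ C)
    (hg : MidpointConvexOn C g) (hCL : C ⊆ L) {x₀ x : X} (hx₀ : x₀ ∈ C) (hx : x ∈ C)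
    (hCx : C ∈ 𝓝[L] x) {M : ℝ} (hM : ∀ᶠ y in 𝓝[L] x₀, y ∈ C ∧ g y ≤ M) :
    ∃ M', ∀ᶠ y in 𝓝[L] x, y ∈ C ∧ g y ≤ M' := by
  obtain ⟨k, hzC, hk⟩ : ∃ k : ℕ,
      x + ((1 / 2 : ℝ) ^ k / (1 - (1 / 2 : ℝ) ^ k)) • (x - x₀) ∈ C ∧ 1 ≤ k := by
    have hpow := tendsto_pow_atTop_nhds_zero_of_lt_one (r := (1 / 2 : ℝ)) (by norm_num) (by norm_num)
    have hratio : Tendsto (fun k : ℕ => (1 / 2 : ℝ) ^ k / (1 - (1 / 2 : ℝ) ^ k)) atTop (𝓝 0) := by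
      simpa [Pi.div_def] using hpow.div (hpow.const_sub 1) (by norm_num)
    exact ((L.tendsto_add_smul_nhdsWithin (hCL hx) (L.sub_mem (hCL hx) (hCL hx₀))).comp hratio
      |>.eventually hCx |>.and (eventually_ge_atTop 1)).exists
  set t : ℝ := (1 / 2 : ℝ) ^ k
  set z := x + (t / (1 - t)) • (x - x₀)
  have ht0 : 0 < t := by positivity
  have ht1 : t < 1 := pow_lt_one₀ (by norm_num) (by norm_num) (by omega)
  refine ⟨(1 - t) * g z + t * M, ?_⟩
  filter_upwards [hCx, (L.tendsto_add_smul_sub_nhdsWithin (hCL hx₀) (hCL hx) t⁻¹).eventually hM]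
    with y hyC ⟨huC, huM⟩
  have hy : (1 - t) • z + t • (x₀ + t⁻¹ • (y - x)) = y := by
    have : 1 - t ≠ 0 := by linarith
    match_scalars <;> field_simp <;> ring
  refine ⟨hyC, ?_⟩
  calc g y = g ((1 - t) • z + t • (x₀ + t⁻¹ • (y - x))) := by rw [hy]
    _ ≤ (1 - t) * g z + t * g (x₀ + t⁻¹ • (y - x)) := hg.le_dyadic hC k hzC huC
    _ ≤ (1 - t) * g z + t * M := by gcongr

theorem eventually_abs_sub_le [ContinuousConstSMul ℝ X] (hC : Convex ℝ C)
    (hg : MidpointConvexOn C g) (hCL : C ⊆ L) {x : X} (hx : x ∈ C) {M : ℝ}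
    (hM : ∀ᶠ y in 𝓝[L] x, y ∈ C ∧ g y ≤ M) (k : ℕ) :
    ∀ᶠ y in 𝓝[C] x, |g y - g x| ≤ (1 / 2 : ℝ) ^ k * (M - g x) := by
  set s : ℝ := (1 / 2 : ℝ) ^ (k + 1)
  have hs0 : 0 < s := by positivity
  have hs2 : 2 * s = (1 / 2 : ℝ) ^ k := by simp only [s, pow_succ]; ring
  have hs_half : 2 * s ≤ 1 := hs2 ▸ pow_le_one₀ (by norm_num) (by norm_num)
  have hgx : g x ≤ M := (hM.self_of_nhdsWithin (hCL hx)).2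
  have hnear : ∀ c : ℝ, ∀ᶠ y in 𝓝[C] x, x + c • (y - x) ∈ C ∧ g (x + c • (y - x)) ≤ M :=
    fun c => nhdsWithin_mono x hCL
      ((L.tendsto_add_smul_sub_nhdsWithin (hCL hx) (hCL hx) c).eventually hM)
  filter_upwards [hnear s⁻¹, hnear (1 - s⁻¹), self_mem_nhdsWithin]
    with y ⟨hzC, hzM⟩ ⟨hwC, hwM⟩ hy
  have hw : x + (1 - s⁻¹) • (y - x) = y + s⁻¹ • (x - y) := by module
  rw [hw] at hwC hwM
  have hupper : g y ≤ (1 - s) * g x + s * M :=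
    calc g y = g ((1 - s) • x + s • (x + s⁻¹ • (y - x))) := by
          rw [one_sub_smul_add_smul_add_inv_smul_sub hs0.ne']
      _ ≤ (1 - s) * g x + s * g (x + s⁻¹ • (y - x)) := hg.le_dyadic hC (k + 1) hx hzC
      _ ≤ (1 - s) * g x + s * M := by gcongr
  have hlower : g x ≤ (1 - s) * g y + s * M :=
    calc g x = g ((1 - s) • y + s • (y + s⁻¹ • (x - y))) := by
          rw [one_sub_smul_add_smul_add_inv_smul_sub hs0.ne']
      _ ≤ (1 - s) * g y + s * g (y + s⁻¹ • (x - y)) := hg.le_dyadic hC (k + 1) hy hwC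
      _ ≤ (1 - s) * g y + s * M := by gcongr
  rw [abs_le, ← hs2]
  constructor
  · rcases le_or_gt (g x - g y) 0 with h | h
    · nlinarith
    · nlinarith [mul_nonneg h.le (by linarith : (0 : ℝ) ≤ 1 - 2 * s)]
  · nlinarith

theorem continuousWithinAt [ContinuousConstSMul ℝ X] (hC : Convex ℝ C)
    (hg : MidpointConvexOn C g) (hCL : C ⊆ L) {x : X} (hx : x ∈ C) {M : ℝ}
    (hM : ∀ᶠ y in 𝓝[L] x, y ∈ C ∧ g y ≤ M) : ContinuousWithinAt g C x := by
  refine Metric.tendsto_nhds.2 fun ε hε => ?_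
  have hsmall : Tendsto (fun k : ℕ => (1 / 2 : ℝ) ^ k * (M - g x)) atTop (𝓝 0) := by
    simpa using (tendsto_pow_atTop_nhds_zero_of_lt_one (r := (1 / 2 : ℝ)) (by norm_num)
      (by norm_num)).mul_const (M - g x)
  obtain ⟨k, hk⟩ := (hsmall.eventually (gt_mem_nhds hε)).exists
  filter_upwards [hg.eventually_abs_sub_le hC hCL hx hM k] with y hy
  exact (Real.dist_eq _ _).trans_lt (hy.trans_lt hk)

end MidpointConvexOn

end Topology

theorem jensen_convex_bounded_above_continuous_general
    {X : Type*} [AddCommGroup X] [Module ℝ X] [TopologicalSpace X]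
    [IsTopologicalAddGroup X] [ContinuousSMul ℝ X]
    {n : ℕ} (e : Fin n → X)
    (C : Set X)
    (hC : C = {x | ∃ lam : Fin n → ℝ, (∀ i, 0 ≤ lam i) ∧ x = ∑ i, lam i • e i})
    (L : Submodule ℝ X) (hL : L = Submodule.span ℝ (Set.range e))
    (intL : Set X)
    (hintL : intL = {x | x ∈ C ∧ ∃ U : Set X, IsOpen U ∧ x ∈ U ∧
      U ∩ (L : Set X) ⊆ C})
    (g : X → ℝ)
    (hjensen : ∀ x ∈ C, ∀ y ∈ C, g ((1 / 2 : ℝ) • (x + y)) ≤ (g x + g y) / 2)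
    (x₀ : X) (hx₀ : x₀ ∈ intL)
    (hbdd : ∃ (U : Set X) (M : ℝ), IsOpen U ∧ x₀ ∈ U ∧
      ∀ y ∈ U ∩ (L : Set X) ∩ C, g y ≤ M) :
    ∀ x ∈ intL, ContinuousWithinAt g C x := by
  have hconv : Convex ℝ C := hC ▸ convex_setOf_nonneg_sum_smul e
  have hCL : C ⊆ L := hC ▸ hL ▸ setOf_nonneg_sum_smul_subset_span e
  have hg : MidpointConvexOn C g := hjensen
  have hrelint : ∀ x ∈ intL, x ∈ C ∧ C ∈ 𝓝[L] x := by
    rintro x hx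
    rw [hintL] at hx
    obtain ⟨hxC, U, hUo, hxU, hUC⟩ := hx
    exact ⟨hxC, mem_nhdsWithin.2 ⟨U, hUo, hxU, hUC⟩⟩
  obtain ⟨hx₀C, hCx₀⟩ := hrelint x₀ hx₀
  obtain ⟨U, M, hUo, hx₀U, hUM⟩ := hbdd
  have hM : ∀ᶠ y in 𝓝[L] x₀, y ∈ C ∧ g y ≤ M := by
    filter_upwards [hCx₀, mem_nhdsWithin.2 ⟨U, hUo, hx₀U, subset_rfl⟩] with y hyC hyUL
    exact ⟨hyC, hUM y ⟨hyUL, hyC⟩⟩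
  intro x hx
  obtain ⟨hxC, hCx⟩ := hrelint x hx
  obtain ⟨M', hM'⟩ := hg.exists_eventually_le_of_eventually_le hconv hCL hx₀C hxC hCx hM
  exact hg.continuousWithinAt hconv hCL hxC hM'

/-- a Jensen-convex function on a convex cone with finite cone-basis that
is bounded above on a relative neighborhood of a point of `int_L C` is continuous
(within `C`) at every point of `int_L C`. -/
theorem jensen_convex_bounded_above_continuous
    {X : Type*} [AddCommGroup X] [Module ℝ X] [TopologicalSpace X]
    [IsTopologicalAddGroup X] [ContinuousSMul ℝ X]
    {n : ℕ} (e : Fin n → X) (he : LinearIndependent ℝ e)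
    (C : Set X)
    (hC : C = {x | ∃ lam : Fin n → ℝ, (∀ i, 0 ≤ lam i) ∧ x = ∑ i, lam i • e i})
    (L : Submodule ℝ X) (hL : L = Submodule.span ℝ (Set.range e))
    (intL : Set X)
    (hintL : intL = {x | x ∈ C ∧ ∃ U : Set X, IsOpen U ∧ x ∈ U ∧
      U ∩ (L : Set X) ⊆ C})
    (g : X → ℝ)
    (hjensen : ∀ x ∈ C, ∀ y ∈ C, g ((1 / 2 : ℝ) • (x + y)) ≤ (g x + g y) / 2)
    (x₀ : X) (hx₀ : x₀ ∈ intL)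
    (hbdd : ∃ (U : Set X) (M : ℝ), IsOpen U ∧ x₀ ∈ U ∧
      ∀ y ∈ U ∩ (L : Set X) ∩ C, g y ≤ M) :
    ∀ x ∈ intL, ContinuousWithinAt g C x :=
  jensen_convex_bounded_above_continuous_general e C hC L hL intL hintL g hjensen x₀ hx₀ hbdd
end

section
/- Let C be a convex cone in a real topological vector space and x₀ ∈ C. If a : C → ℝ is additive (a(x+y) = a(x)+a(y)) and bounded on a neighborhood of some interior point of C relative to span(C), and C has a finite cone-basis, then a is positively homogeneous on the relative interior of C: a(tx) = t·a(x) for all t > 0 and x ∈ int_L C. -/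
open Set Filter Topology

/-!
Restricted to a ray `s ↦ s • x` of the cone, `a` becomes a solution `f` of Cauchy's equation on
`[0, ∞)`, and `g s = f s - s * f 1` is again additive with `g 1 = 0`, so `g` vanishes at every
`k / m`. Subtracting the largest such point below `t` shows that `g t` is a value of `g` on
arbitrarily short intervals `[0, ε)`, hence so is every multiple `n * g t`. Boundedness of `a`
near a point `x₁` of the cone bounds `f` near `0⁺`, since `a (x₁ + s • x) = a x₁ + f s`; therefore
`g t = 0`.
-/

def AdditiveOn {M N : Type*} [Add M] [Add N] (f : M → N) (S : Set M) : Prop :=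
  ∀ x ∈ S, ∀ y ∈ S, f (x + y) = f x + f y

namespace AdditiveOn

section HalfLine

variable {f : ℝ → ℝ}

lemma sub_mul_const (hf : AdditiveOn f (Ici 0)) (c : ℝ) :
    AdditiveOn (fun s => f s - s * c) (Ici 0) := by
  intro s hs t ht
  simp only [hf s hs t ht]
  ring

lemma map_natCast_mul (hf : AdditiveOn f (Ici 0)) (n : ℕ) {s : ℝ} (hs : 0 ≤ s) :
    f (n * s) = n * f s := by
  induction n with
  | zero => simpa using hf 0 (mem_Ici.2 le_rfl) 0 (mem_Ici.2 le_rfl)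
  | succ n ih =>
    rw [Nat.cast_succ, add_one_mul, hf _ (mem_Ici.2 (by positivity)) _ hs, ih]
    ring

lemma exists_mem_Ico_apply_eq (hf : AdditiveOn f (Ici 0)) (h1 : f 1 = 0) {t : ℝ} (ht : 0 ≤ t)
    {ε : ℝ} (hε : 0 < ε) : ∃ r ∈ Ico 0 ε, f t = f r := by
  obtain ⟨m, hm⟩ := exists_nat_gt (1 / ε)
  have hm0 : (0 : ℝ) < m := (one_div_pos.mpr hε).trans hm
  have hunit : f (1 / m) = 0 := by
    have h := hf.map_natCast_mul m (s := 1 / m) (by positivity)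
    rw [mul_one_div_cancel hm0.ne', h1] at h
    exact (mul_eq_zero.mp h.symm).resolve_left hm0.ne'
  set k := ⌊t * m⌋₊
  have hk : (k : ℝ) * (1 / m) ≤ t := by
    rw [mul_one_div, div_le_iff₀ hm0]
    exact Nat.floor_le (by positivity)
  refine ⟨t - k * (1 / m), ⟨sub_nonneg.mpr hk, ?_⟩, ?_⟩
  · have hlt : t * m < k + 1 := Nat.lt_floor_add_one _
    have : t - k * (1 / m) < 1 / m := by
      rw [mul_one_div, sub_lt_iff_lt_add, ← add_div, lt_div_iff₀ hm0]
      linarith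
    exact this.trans ((one_div_lt hm0 hε).mpr hm)
  · calc f t = f (k * (1 / m) + (t - k * (1 / m))) := by rw [add_sub_cancel]
      _ = f (k * (1 / m)) + f (t - k * (1 / m)) :=
        hf _ (mem_Ici.2 (by positivity)) _ (sub_nonneg.mpr hk)
      _ = f (t - k * (1 / m)) := by
        rw [hf.map_natCast_mul k (by positivity), hunit, mul_zero, zero_add]

lemma eq_zero_of_eventually_abs_le (hf : AdditiveOn f (Ici 0)) (h1 : f 1 = 0) {K : ℝ}
    (hK : ∀ᶠ s in 𝓝[≥] 0, |f s| ≤ K) {t : ℝ} (ht : 0 ≤ t) : f t = 0 := by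
  obtain ⟨δ, hδ, hδK⟩ := mem_nhdsGE_iff_exists_Ico_subset.mp hK
  have hmul_le : ∀ n : ℕ, (n + 1) * |f t| ≤ K := by
    intro n
    obtain ⟨r, ⟨hr0, hrδ⟩, hr⟩ :=
      hf.exists_mem_Ico_apply_eq h1 ht (ε := δ / (n + 1)) (div_pos hδ (by positivity))
    have hnr : |f ((n + 1 : ℕ) * r)| ≤ K :=
      hδK ⟨by positivity, by push_cast; rwa [lt_div_iff₀' (by positivity)] at hrδ⟩
    rwa [hf.map_natCast_mul _ hr0, ← hr, abs_mul, Nat.abs_cast, Nat.cast_succ] at hnr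
  by_contra h
  obtain ⟨n, hn⟩ := exists_nat_gt (K / |f t|)
  rw [div_lt_iff₀ (abs_pos.mpr h)] at hn
  linarith [hmul_le n, abs_nonneg (f t)]

theorem eq_mul_of_eventually_abs_le (hf : AdditiveOn f (Ici 0)) {K : ℝ}
    (hK : ∀ᶠ s in 𝓝[≥] 0, |f s| ≤ K) {t : ℝ} (ht : 0 ≤ t) : f t = t * f 1 := by
  have hg : ∀ᶠ s in 𝓝[≥] 0, |f s - s * f 1| ≤ K + |f 1| := by
    filter_upwards [hK, Icc_mem_nhdsGE zero_lt_one] with s hs ⟨hs0, hs1⟩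
    calc |f s - s * f 1| ≤ |f s| + |s| * |f 1| := by rw [← abs_mul]; exact abs_sub _ _
      _ ≤ K + |f 1| := by rw [abs_of_nonneg hs0]; nlinarith [abs_nonneg (f 1)]
  have := (hf.sub_mul_const (f 1)).eq_zero_of_eventually_abs_le (by simp) hg ht
  linarith

end HalfLine

section Cone

variable {X : Type*} [AddCommGroup X] [Module ℝ X] {P : PointedCone ℝ X} {a : X → ℝ}

lemma comp_smul (ha : AdditiveOn a P) {x : X} (hx : x ∈ P) :
    AdditiveOn (fun s : ℝ => a (s • x)) (Ici 0) := by
  intro s hs t ht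
  simp only [add_smul]
  exact ha _ (P.smul_mem hs hx) _ (P.smul_mem ht hx)

variable [TopologicalSpace X] [ContinuousAdd X] [ContinuousSMul ℝ X]

lemma eventually_abs_apply_smul_le (ha : AdditiveOn a P) {x₁ x : X} (hx₁ : x₁ ∈ P) (hx : x ∈ P)
    {U : Set X} (hU : U ∈ 𝓝 x₁) {M : ℝ} (hM : ∀ y ∈ U ∩ P, |a y| ≤ M) :
    ∀ᶠ s in 𝓝[≥] (0 : ℝ), |a (s • x)| ≤ M + |a x₁| := by
  have hray : Tendsto (fun s : ℝ => x₁ + s • x) (𝓝 0) (𝓝 x₁) :=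
    (continuous_const.add (continuous_id.smul continuous_const)).tendsto' 0 x₁ (by simp)
  filter_upwards [nhdsWithin_le_nhds (hray hU), self_mem_nhdsWithin] with s hsU hs
  have hsx : s • x ∈ P := P.smul_mem hs hx
  have hbound := hM _ ⟨hsU, P.add_mem hx₁ hsx⟩
  rw [ha _ hx₁ _ hsx] at hbound
  calc |a (s • x)| = |(a x₁ + a (s • x)) - a x₁| := by rw [add_sub_cancel_left]
    _ ≤ |a x₁ + a (s • x)| + |a x₁| := abs_sub _ _
    _ ≤ M + |a x₁| := by linarith

theorem map_smul_of_abs_le (ha : AdditiveOn a P) {x₁ x : X} (hx₁ : x₁ ∈ P) (hx : x ∈ P)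
    {U : Set X} (hU : U ∈ 𝓝 x₁) {M : ℝ} (hM : ∀ y ∈ U ∩ P, |a y| ≤ M) {t : ℝ} (ht : 0 ≤ t) :
    a (t • x) = t * a x := by
  simpa using (ha.comp_smul hx).eq_mul_of_eventually_abs_le
    (ha.eventually_abs_apply_smul_le hx₁ hx hU hM) ht

end Cone

end AdditiveOn

lemma PointedCone.coe_hull_range {X ι : Type*} [AddCommGroup X] [Module ℝ X] [Fintype ι]
    (e : ι → X) : (hull ℝ (range e) : Set X) =
      {x | ∃ lam : ι → ℝ, (∀ i, 0 ≤ lam i) ∧ x = ∑ i, lam i • e i} := by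
  ext x
  simp only [mem_ofPred_eq, SetLike.mem_coe, Submodule.mem_span_range_iff_exists_fun]
  constructor
  · rintro ⟨c, rfl⟩
    exact ⟨fun i => c i, fun i => (c i).2, rfl⟩
  · rintro ⟨lam, hlam, rfl⟩
    exact ⟨fun i => ⟨lam i, hlam i⟩, rfl⟩

theorem additive_bounded_pos_homogeneous_general
    {X : Type*} [AddCommGroup X] [Module ℝ X] [TopologicalSpace X]
    [IsTopologicalAddGroup X] [ContinuousSMul ℝ X]
    {n : ℕ} (e : Fin n → X)
    (C : Set X)
    (hC : C = {x | ∃ lam : Fin n → ℝ, (∀ i, 0 ≤ lam i) ∧ x = ∑ i, lam i • e i})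
    (L : Submodule ℝ X) (hL : L = Submodule.span ℝ (Set.range e))
    (intL : Set X)
    (hintL : intL = {x | x ∈ C ∧ ∃ U : Set X, IsOpen U ∧ x ∈ U ∧
      U ∩ (L : Set X) ⊆ C})
    (a : X → ℝ)
    (hadd : ∀ x ∈ C, ∀ y ∈ C, a (x + y) = a x + a y)
    (hbdd : ∃ x₁ ∈ intL, ∃ (U : Set X) (M : ℝ), IsOpen U ∧ x₁ ∈ U ∧
      ∀ y ∈ U ∩ (L : Set X) ∩ C, |a y| ≤ M) :
    ∀ (t : ℝ), 0 < t → ∀ x ∈ intL, a (t • x) = t * a x := by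
  rw [← PointedCone.coe_hull_range] at hC
  subst hC hL hintL
  obtain ⟨x₁, ⟨hx₁, -⟩, U, M, hU, hx₁U, hM⟩ := hbdd
  rintro t ht x ⟨hx, -⟩
  exact AdditiveOn.map_smul_of_abs_le hadd hx₁ hx (hU.mem_nhds hx₁U)
    (fun y ⟨hyU, hyC⟩ => hM y ⟨⟨hyU, PointedCone.hull_le_span ℝ _ hyC⟩, hyC⟩) ht.le

/-- an additive function on a convex cone with finite cone-basis that is
bounded on a relative neighborhood of an interior point of `C` (relative to the span
`L` of the basis) is positively homogeneous on `int_L C`. -/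
theorem additive_bounded_pos_homogeneous
    {X : Type*} [AddCommGroup X] [Module ℝ X] [TopologicalSpace X]
    [IsTopologicalAddGroup X] [ContinuousSMul ℝ X]
    {n : ℕ} (e : Fin n → X) (he : LinearIndependent ℝ e)
    (C : Set X)
    (hC : C = {x | ∃ lam : Fin n → ℝ, (∀ i, 0 ≤ lam i) ∧ x = ∑ i, lam i • e i})
    (L : Submodule ℝ X) (hL : L = Submodule.span ℝ (Set.range e))
    (intL : Set X)
    (hintL : intL = {x | x ∈ C ∧ ∃ U : Set X, IsOpen U ∧ x ∈ U ∧
      U ∩ (L : Set X) ⊆ C})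
    (a : X → ℝ)
    (hadd : ∀ x ∈ C, ∀ y ∈ C, a (x + y) = a x + a y)
    (hbdd : ∃ x₁ ∈ intL, ∃ (U : Set X) (M : ℝ), IsOpen U ∧ x₁ ∈ U ∧
      ∀ y ∈ U ∩ (L : Set X) ∩ C, |a y| ≤ M) :
    ∀ (t : ℝ), 0 < t → ∀ x ∈ intL, a (t • x) = t * a x :=
  additive_bounded_pos_homogeneous_general e C hC L hL intL hintL a hadd hbdd
end

section
/- Let C be a convex cone in a real topological vector space Y, φ : C ⇉ Y a ℚ₊-homogeneous superadditive correspondence with nonempty values, and suppose φ(x₀+V∩(K−x₀)) is controlled in the sense that φ(z) ⊆ nŪ and φ(x₀) ⊆ nŪ for some n ∈ ℕ, closed balanced set Ū, where γz = x + (γ−1)x₀ for rational γ > 1. Then φ(x) ⊆ γnŪ + (γ−1)nŪ; in particular if Ū + Ū ⊆ W then φ(x) ⊆ γnW. -/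
/-!
Fix `w ∈ φ x₀`. Superadditivity at `x` and `(γ - 1) x₀`, together with `ℚ₊`-homogeneity
(here the rationality of `γ` is needed), gives `φ x + (γ - 1) w ⊆ φ (γ z) = γ φ z`, hence
`φ x ⊆ γ φ z - (γ - 1) φ x₀ ⊆ γ n Ū - (γ - 1) n Ū`, and `-Ū = Ū` because `Ū` is balanced.
For the second inclusion, `(γ - 1) n Ū ⊆ γ n Ū` since `Ū` is balanced, and
`γ n Ū + γ n Ū = γ n (Ū + Ū)`.
-/

open Pointwise

theorem Set.subset_sub_of_add_subset {G : Type*} [AddCommGroup G] {A B D : Set G}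
    (hB : B.Nonempty) (h : A + B ⊆ D) : A ⊆ D - B := by
  obtain ⟨b, hb⟩ := hB
  intro a ha
  exact ⟨a + b, h (Set.add_mem_add ha hb), b, hb, add_sub_cancel_right a b⟩

section Balanced

variable {𝕜 E : Type*} [NormedField 𝕜] [AddCommGroup E] [Module 𝕜 E] {U : Set E}

theorem Balanced.smul_sub_smul_eq (hU : Balanced 𝕜 U) (a b : 𝕜) :
    a • U - b • U = a • U + b • U := by
  rw [sub_eq_add_neg, ← Set.smul_set_neg, hU.neg_eq]

theorem Balanced.smul_add_smul_subset_smul {W : Set E} (hU : Balanced 𝕜 U) (hUW : U + U ⊆ W)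
    {a b : 𝕜} (hba : ‖b‖ ≤ ‖a‖) : a • U + b • U ⊆ a • W :=
  calc a • U + b • U ⊆ a • U + a • U := by gcongr; exact hU.smul_mono hba
    _ = a • (U + U) := (smul_add a U U).symm
    _ ⊆ a • W := by gcongr

end Balanced

theorem subset_smul_sub_smul_of_superadditive {E : Type*} [AddCommGroup E] [Module ℝ E]
    {C : Set E} (hCsmul : ∀ t : ℝ, 0 < t → ∀ x ∈ C, t • x ∈ C) {φ : E → Set E}
    (hne : ∀ x ∈ C, (φ x).Nonempty) (hsuper : ∀ x ∈ C, ∀ y ∈ C, φ x + φ y ⊆ φ (x + y))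
    (hQhom : ∀ r : ℚ, 0 < r → ∀ x ∈ C, φ ((r : ℝ) • x) = (r : ℝ) • φ x)
    {x z x₀ : E} (hx : x ∈ C) (hz : z ∈ C) (hx₀ : x₀ ∈ C) {γ : ℚ} (hγ : 1 < γ)
    (hγz : (γ : ℝ) • z = x + ((γ : ℝ) - 1) • x₀) :
    φ x ⊆ (γ : ℝ) • φ z - ((γ : ℝ) - 1) • φ x₀ := by
  have hφx₀ : φ (((γ : ℝ) - 1) • x₀) = ((γ : ℝ) - 1) • φ x₀ := by
    exact_mod_cast hQhom (γ - 1) (sub_pos.2 hγ) x₀ hx₀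
  refine Set.subset_sub_of_add_subset ((hne x₀ hx₀).smul_set) ?_
  rw [← hφx₀, ← hQhom γ (zero_lt_one.trans hγ) z hz, hγz]
  exact hsuper x hx _ (hCsmul _ (by exact_mod_cast sub_pos.2 hγ) x₀ hx₀)

theorem key_inclusion_lemma_one_general
    {Y : Type*} [AddCommGroup Y] [Module ℝ Y] [TopologicalSpace Y]
    (C : Set Y)
    (hCsmul : ∀ (t : ℝ), 0 < t → ∀ x ∈ C, t • x ∈ C)
    (φ : Y → Set Y)
    (hne : ∀ x ∈ C, (φ x).Nonempty)
    (hsuper : ∀ x ∈ C, ∀ y ∈ C, φ x + φ y ⊆ φ (x + y))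
    (hQhom : ∀ (r : ℚ), 0 < r → ∀ x ∈ C, φ ((r : ℝ) • x) = (r : ℝ) • φ x)
    (x z x₀ : Y) (hx : x ∈ C) (hz : z ∈ C) (hx₀ : x₀ ∈ C)
    (γ : ℚ) (hγ : 1 < γ)
    (hγz : (γ : ℝ) • z = x + ((γ : ℝ) - 1) • x₀)
    (U : Set Y) (hUbal : Balanced ℝ U)
    (n : ℕ)
    (hzU : φ z ⊆ (n : ℝ) • U) (hx₀U : φ x₀ ⊆ (n : ℝ) • U) :
    φ x ⊆ ((γ : ℝ) * n) • U + (((γ : ℝ) - 1) * n) • U ∧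
    (∀ W : Set Y, IsOpen W → U + U ⊆ W → φ x ⊆ ((γ : ℝ) * n) • W) := by
  have hmain : φ x ⊆ ((γ : ℝ) * n) • U + (((γ : ℝ) - 1) * n) • U :=
    calc φ x ⊆ (γ : ℝ) • φ z - ((γ : ℝ) - 1) • φ x₀ :=
          subset_smul_sub_smul_of_superadditive hCsmul hne hsuper hQhom hx hz hx₀ hγ hγz
      _ ⊆ (γ : ℝ) • ((n : ℝ) • U) - ((γ : ℝ) - 1) • ((n : ℝ) • U) := by gcongr
      _ = _ := by rw [smul_smul, smul_smul, hUbal.smul_sub_smul_eq]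
  refine ⟨hmain, fun W _ hUW => hmain.trans (hUbal.smul_add_smul_subset_smul hUW ?_)⟩
  have hγ1 : (1 : ℝ) < γ := by exact_mod_cast hγ
  rw [Real.norm_of_nonneg (by positivity), Real.norm_of_nonneg (by positivity)]
  gcongr
  linarith

/-- the key inclusion in the proof of Lemma 1: if `φ` is a
`ℚ₊`-homogeneous superadditive correspondence, `γ > 1` is rational,
`γ • z = x + (γ - 1) • x₀` with `x, z, x₀ ∈ C` and `φ z ⊆ n • Ū`, `φ x₀ ⊆ n • Ū`
for a closed balanced neighborhood `Ū` of `0`, then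
`φ x ⊆ (γ n) • Ū + ((γ - 1) n) • Ū`; if moreover `Ū + Ū ⊆ W`, then `φ x ⊆ (γ n) • W`. -/
theorem key_inclusion_lemma_one
    {Y : Type*} [AddCommGroup Y] [Module ℝ Y] [TopologicalSpace Y]
    [IsTopologicalAddGroup Y] [ContinuousSMul ℝ Y]
    (C : Set Y)
    (hCadd : ∀ x ∈ C, ∀ y ∈ C, x + y ∈ C)
    (hCsmul : ∀ (t : ℝ), 0 < t → ∀ x ∈ C, t • x ∈ C)
    (φ : Y → Set Y)
    (hne : ∀ x ∈ C, (φ x).Nonempty)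
    (hsuper : ∀ x ∈ C, ∀ y ∈ C, φ x + φ y ⊆ φ (x + y))
    (hQhom : ∀ (r : ℚ), 0 < r → ∀ x ∈ C, φ ((r : ℝ) • x) = (r : ℝ) • φ x)
    (x z x₀ : Y) (hx : x ∈ C) (hz : z ∈ C) (hx₀ : x₀ ∈ C)
    (γ : ℚ) (hγ : 1 < γ)
    (hγz : (γ : ℝ) • z = x + ((γ : ℝ) - 1) • x₀)
    (U : Set Y) (hUclosed : IsClosed U) (hUbal : Balanced ℝ U)
    (hU0 : U ∈ nhds (0 : Y))
    (n : ℕ) (hn : 0 < n)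
    (hzU : φ z ⊆ (n : ℝ) • U) (hx₀U : φ x₀ ⊆ (n : ℝ) • U) :
    φ x ⊆ ((γ : ℝ) * n) • U + (((γ : ℝ) - 1) * n) • U ∧
    (∀ W : Set Y, IsOpen W → U + U ⊆ W → φ x ⊆ ((γ : ℝ) * n) • W) :=
  key_inclusion_lemma_one_general C hCsmul φ hne hsuper hQhom x z x₀ hx hz hx₀ γ hγ hγz U hUbal n
    hzU hx₀U
end
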